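/- Let S be a finite set, F = F(S) the free group on S, and s : S → ℝ_{>0} a significance function. Let (π_n) and (π'_n) be sequences of finitely described invariant random subgroups of F such that π_n converges to some π_∞ ∈ IRS(F) in the weak* topology and d^s_edit(π_n, π'_n) → 0 as n → ∞. Then π'_n also converges to π_∞ in the weak* topology. -/

import Mathlib

/-!
Represent `π k` and `π' k` by actions `ρ` on `Fin n` and `φ` on `Fin m`, `n ≤ m`, and choose a
relabelling `θ` making `Σ_s sig(s) d_H(ρ(s), θφ(s)θ⁻¹)` small; then every `d_H` is small.
Extending `ρ` to `Fin m` by fixing the `m - n` new points moves `∫ f dΦ(ρ)` by at most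
`2‖f‖(m - n)/m ≤ 2‖f‖ d_H`. A continuous `f` on the compact space `{0,1}^F` is determined up to
`ε` by the coordinates in a finite set `W` of words. Two actions `σ, τ` on the same set act alike
on a word `w` at all but `|w| · max_s #{x | σ(s)x ≠ τ(s)x}` points, so outside at most
`Σ_{w ∈ W} |w| · m · max_s d_H` points their stabilizers agree on `W`. Hence
`|∫ f dπ k - ∫ f dπ' k| ≤ ε + C_{f,W,sig} · d^s_edit(π k, π' k)`.
-/

open MeasureTheory
open scoped ENNReal

/-- The finitely described invariant random subgroup `Φ(σ)` induced by a finite action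
`σ : S → Sym(X)`: sample a uniform `x ∈ X` and output (the indicator of) `Stab(σ,x)`,
as a Borel probability measure on `{0,1}^{F(S)} = FreeGroup S → Bool`. -/
noncomputable def PhiIRS {S X : Type} [Fintype X] [DecidableEq X]
    (σ : S → Equiv.Perm X) : Measure (FreeGroup S → Bool) :=
  (Fintype.card X : ℝ≥0∞)⁻¹ •
    ∑ x : X, Measure.dirac (fun w : FreeGroup S => decide (FreeGroup.lift σ w x = x))

/-- The `sig`-weighted edit distance between actions `ρ : S → Sym(Fin n)` and
`φ : S → Sym(Fin m)` with `n ≤ m` (identifying `Fin n ⊆ Fin m`):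
`min_{θ ∈ Sym(Fin m)} Σ_s sig(s)·d_H(ρ(s), θ φ(s) θ⁻¹)` with the generalized
normalized Hamming distance. -/
noncomputable def editDistFin {S : Type} [Fintype S] (sig : S → ℝ) {n m : ℕ} (h : n ≤ m)
    (ρ : S → Equiv.Perm (Fin n)) (φ : S → Equiv.Perm (Fin m)) : ℝ :=
  ⨅ θ : Equiv.Perm (Fin m),
    ∑ s : S, sig s *
      (1 - (Nat.card {x : Fin n //
          Fin.castLE h (ρ s x) = (θ * φ s * θ⁻¹) (Fin.castLE h x)} : ℝ) / m)

/-- The `sig`-weighted edit distance between finitely described IRSs: the infimum of the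
edit distances over all pairs of finite actions representing them (arranged so that one
underlying set contains the other). -/
noncomputable def editDistIRS {S : Type} [Fintype S] (sig : S → ℝ)
    (π π' : Measure (FreeGroup S → Bool)) : ℝ :=
  sInf {d : ℝ |
    ∃ (n m : ℕ) (h : n ≤ m) (ρ : S → Equiv.Perm (Fin n)) (φ : S → Equiv.Perm (Fin m)),
      ((PhiIRS ρ = π ∧ PhiIRS φ = π') ∨ (PhiIRS ρ = π' ∧ PhiIRS φ = π)) ∧
      d = editDistFin sig h ρ φ}

namespace Equiv.Perm

variable {X : Type*} [Fintype X] [DecidableEq X]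

theorem hammingDist_mul_le (σ₁ σ₂ τ₁ τ₂ : Perm X) :
    hammingDist ⇑(σ₁ * σ₂) ⇑(τ₁ * τ₂) ≤ hammingDist ⇑σ₁ ⇑τ₁ + hammingDist ⇑σ₂ ⇑τ₂ := by
  have hleft : hammingDist ⇑(σ₁ * σ₂) ⇑(σ₁ * τ₂) = hammingDist ⇑σ₂ ⇑τ₂ :=
    hammingDist_comp (fun _ => σ₁) fun _ => σ₁.injective
  have hright : hammingDist ⇑(σ₁ * τ₂) ⇑(τ₁ * τ₂) = hammingDist ⇑σ₁ ⇑τ₁ :=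
    Finset.card_equiv τ₂ fun _ => by simp only [Finset.mem_filter_univ]; rfl
  calc hammingDist ⇑(σ₁ * σ₂) ⇑(τ₁ * τ₂)
      ≤ hammingDist ⇑(σ₁ * σ₂) ⇑(σ₁ * τ₂) + hammingDist ⇑(σ₁ * τ₂) ⇑(τ₁ * τ₂) :=
        hammingDist_triangle _ _ _
    _ = _ := by rw [hleft, hright, add_comm]

theorem hammingDist_inv (σ τ : Perm X) : hammingDist ⇑σ⁻¹ ⇑τ⁻¹ = hammingDist ⇑σ ⇑τ := by
  refine Finset.card_equiv τ⁻¹ fun x => ?_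
  simp [eq_comm, ← Perm.eq_inv_iff_eq]

end Equiv.Perm

namespace FreeGroup

variable {S : Type*}

theorem lift_comp_apply {G H : Type*} [Group G] [Group H] (φ : G →* H) (σ : S → G)
    (w : FreeGroup S) : lift (φ ∘ σ) w = φ (lift σ w) :=
  (lift_unique (φ.comp (lift σ)) fun _ => by simp).symm

theorem lift_of_isEmpty {G : Type*} [IsEmpty S] [Group G] (σ : S → G) (w : FreeGroup S) :
    lift σ w = 1 := by
  rw [show lift σ = 1 from ext_hom _ _ fun s => isEmptyElim s]
  rfl

variable {X : Type*} [Fintype X] [DecidableEq X]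

theorem hammingDist_lift_mk_le (σ τ : S → Equiv.Perm X) {b : ℝ}
    (hb : ∀ s, (hammingDist ⇑(σ s) ⇑(τ s) : ℝ) ≤ b) (L : List (S × Bool)) :
    (hammingDist ⇑(lift σ (mk L)) ⇑(lift τ (mk L)) : ℝ) ≤ L.length * b := by
  induction L with
  | nil => simp [lift_mk]
  | cons p L ih =>
    simp only [lift_mk, List.map_cons, List.prod_cons, List.length_cons] at ih ⊢
    have hp : (hammingDist ⇑(cond p.2 (σ p.1) (σ p.1)⁻¹) ⇑(cond p.2 (τ p.1) (τ p.1)⁻¹) : ℝ)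
        ≤ b := by
      cases p.2
      · rw [cond_false, cond_false, Equiv.Perm.hammingDist_inv]
        exact hb _
      · exact hb _
    calc _ ≤ ((hammingDist ⇑(cond p.2 (σ p.1) (σ p.1)⁻¹) ⇑(cond p.2 (τ p.1) (τ p.1)⁻¹) +
          hammingDist ⇑(L.map fun x => cond x.2 (σ x.1) (σ x.1)⁻¹).prod
            ⇑(L.map fun x => cond x.2 (τ x.1) (τ x.1)⁻¹).prod : ℕ) : ℝ) :=
          Nat.cast_le.2 (Equiv.Perm.hammingDist_mul_le _ _ _ _)
      _ ≤ b + L.length * b := by push_cast; exact add_le_add hp ih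
      _ = (L.length + 1 : ℕ) * b := by push_cast; ring

theorem hammingDist_lift_le [DecidableEq S] (σ τ : S → Equiv.Perm X) {b : ℝ}
    (hb : ∀ s, (hammingDist ⇑(σ s) ⇑(τ s) : ℝ) ≤ b) (w : FreeGroup S) :
    (hammingDist ⇑(lift σ w) ⇑(lift τ w) : ℝ) ≤ w.norm * b := by
  have := hammingDist_lift_mk_le σ τ hb w.toWord
  rwa [mk_toWord] at this

end FreeGroup

theorem ContinuousMap.exists_finset_dist_lt {ι α β : Type*} [UniformSpace α]
    [DiscreteUniformity α] [CompactSpace α] [PseudoMetricSpace β]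
    (f : C(ι → α, β)) {ε : ℝ} (hε : 0 < ε) :
    ∃ W : Finset ι, ∀ A B : ι → α, (∀ i ∈ W, A i = B i) → dist (f A) (f B) < ε := by
  have hU := CompactSpace.uniformContinuous_of_continuous f.continuous
    (Metric.dist_mem_uniformity hε)
  rw [Pi.uniformity, Filter.mem_map, Filter.mem_iInf] at hU
  obtain ⟨I, hI, V, hV, hUV⟩ := hU
  refine ⟨hI.toFinset, fun A B hAB => ?_⟩
  have : (A, B) ∈ ⋂ i, V i := Set.mem_iInter.2 fun i => by
    obtain ⟨t, ht, htV⟩ := hV i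
    rw [DiscreteUniformity.eq_principal_setRelId] at ht
    exact htV (ht (hAB i (hI.mem_toFinset.2 i.2)))
  rw [← hUV] at this
  exact this

theorem abs_sum_sub_sum_le {X : Type*} [Fintype X] [DecidableEq X] (g h : X → ℝ) (B : Finset X)
    {ε C : ℝ} (hgood : ∀ x ∉ B, |g x - h x| ≤ ε) (hbad : ∀ x ∈ B, |g x - h x| ≤ C) :
    |∑ x, g x - ∑ x, h x| ≤ Bᶜ.card * ε + B.card * C := by
  rw [← Finset.sum_sub_distrib, ← Finset.sum_compl_add_sum B]
  refine (abs_add_le _ _).trans (add_le_add ?_ ?_)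
  · refine (Finset.abs_sum_le_sum_abs _ _).trans ?_
    simpa using Finset.sum_le_sum fun x hx => hgood x (Finset.mem_compl.1 hx)
  · refine (Finset.abs_sum_le_sum_abs _ _).trans ?_
    simpa using Finset.sum_le_sum hbad

theorem abs_sum_comp_div_sub_sum_div_le {X Y : Type*} [Fintype X] [Fintype Y] (e : Y ↪ X)
    (g : X → ℝ) {C : ℝ} (hg : ∀ x, |g x| ≤ C) :
    |(∑ y, g (e y)) / Fintype.card Y - (∑ x, g x) / Fintype.card X|
      ≤ 2 * C * (Fintype.card X - Fintype.card Y) / Fintype.card X := by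
  classical
  rcases isEmpty_or_nonempty X with hX | hX
  · have := Function.isEmpty e
    simp
  have hC : 0 ≤ C := (abs_nonneg _).trans (hg (Classical.arbitrary X))
  have hm : (Fintype.card X : ℝ) ≠ 0 := Nat.cast_ne_zero.2 Fintype.card_ne_zero
  have hnm : (Fintype.card Y : ℝ) ≤ Fintype.card X := by
    exact_mod_cast Fintype.card_le_of_embedding e
  have hmn : 0 ≤ ((Fintype.card X : ℝ) - Fintype.card Y) / Fintype.card X :=
    div_nonneg (sub_nonneg.2 hnm) (Nat.cast_nonneg _)
  set A := ∑ y, g (e y)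
  set R := ∑ x ∈ (Finset.univ.map e)ᶜ, g x
  have hsplit : ∑ x, g x = A + R := by
    rw [← Finset.sum_add_sum_compl (Finset.univ.map e), Finset.sum_map]
  have hAn : A / Fintype.card Y * Fintype.card Y = A := div_mul_cancel_of_imp fun hn => by
    have : IsEmpty Y := Fintype.card_eq_zero_iff.1 (by exact_mod_cast hn)
    simp [A]
  have hA : |A / Fintype.card Y| ≤ C := by
    rw [abs_div, Nat.abs_cast]
    refine div_le_of_le_mul₀ (Nat.cast_nonneg _) hC ?_
    refine (Finset.abs_sum_le_sum_abs _ _).trans ?_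
    simpa [mul_comm] using Finset.sum_le_sum fun y (_ : y ∈ Finset.univ) => hg (e y)
  have hR : |R| ≤ (Fintype.card X - Fintype.card Y) * C := by
    refine (Finset.abs_sum_le_sum_abs _ _).trans ?_
    refine (Finset.sum_le_sum fun x _ => hg x).trans ?_
    rw [Finset.sum_const, nsmul_eq_mul, Finset.card_compl, Finset.card_map, Finset.card_univ,
      Nat.cast_sub (Fintype.card_le_of_embedding e)]
  calc |A / Fintype.card Y - (∑ x, g x) / Fintype.card X|
      = |A / Fintype.card Y * ((Fintype.card X - Fintype.card Y) / Fintype.card X)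
          - R / Fintype.card X| := by
        congr 1
        rw [hsplit, mul_div_assoc', mul_sub, hAn, sub_div, mul_div_cancel_right₀ _ hm]
        ring
    _ ≤ |A / Fintype.card Y| * ((Fintype.card X - Fintype.card Y) / Fintype.card X)
          + |R| / Fintype.card X := by
        refine (abs_sub _ _).trans (le_of_eq ?_)
        rw [abs_mul, abs_of_nonneg hmn, abs_div R, Nat.abs_cast]
    _ ≤ C * ((Fintype.card X - Fintype.card Y) / Fintype.card X)
          + (Fintype.card X - Fintype.card Y) * C / Fintype.card X := by gcongr
    _ = 2 * C * (Fintype.card X - Fintype.card Y) / Fintype.card X := by ring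

section PhiIRS

variable {S X : Type} [DecidableEq X]

def stabIndicator (σ : S → Equiv.Perm X) (x : X) : FreeGroup S → Bool :=
  fun w => decide (FreeGroup.lift σ w x = x)

theorem integral_PhiIRS [Countable S] [Fintype X] (σ : S → Equiv.Perm X)
    (f : C(FreeGroup S → Bool, ℝ)) :
    ∫ A, f A ∂PhiIRS σ = (∑ x, f (stabIndicator σ x)) / Fintype.card X := by
  have hint (A : FreeGroup S → Bool) : Integrable f (Measure.dirac A) :=
    (BoundedContinuousFunction.mkOfCompact f).integrable _
  rw [PhiIRS, integral_smul_measure, integral_finsetSum_measure fun _ _ => hint _]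
  simp only [integral_dirac, ENNReal.toReal_inv, ENNReal.toReal_natCast, smul_eq_mul,
    inv_mul_eq_div]
  rfl

theorem stabIndicator_conj (σ : S → Equiv.Perm X) (θ : Equiv.Perm X) (x : X) :
    stabIndicator (fun s => θ * σ s * θ⁻¹) x = stabIndicator σ (θ⁻¹ x) := by
  funext w
  have hconj : FreeGroup.lift (fun s => θ * σ s * θ⁻¹) w = θ * FreeGroup.lift σ w * θ⁻¹ :=
    FreeGroup.lift_comp_apply (MulAut.conj θ).toMonoidHom σ w
  simp only [stabIndicator, hconj, Equiv.Perm.mul_apply, ← Equiv.Perm.eq_inv_iff_eq]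

theorem PhiIRS_conj [Fintype X] (σ : S → Equiv.Perm X) (θ : Equiv.Perm X) :
    PhiIRS (fun s => θ * σ s * θ⁻¹) = PhiIRS σ := by
  simp only [PhiIRS, ← stabIndicator.eq_def, stabIndicator_conj]
  congr 1
  exact Equiv.sum_comp θ⁻¹ fun x => Measure.dirac (stabIndicator σ x)

theorem stabIndicator_viaEmbedding {Y : Type} [DecidableEq Y] (ρ : S → Equiv.Perm Y) (e : Y ↪ X)
    (y : Y) :
    stabIndicator (fun s => (ρ s).viaEmbedding e) (e y) = stabIndicator ρ y := by
  funext w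
  have hvia : FreeGroup.lift (fun s => (ρ s).viaEmbedding e) w
      = (FreeGroup.lift ρ w).viaEmbedding e :=
    FreeGroup.lift_comp_apply (Equiv.Perm.viaEmbeddingHom e) ρ w
  simp only [stabIndicator, hvia, Equiv.Perm.viaEmbedding_apply, e.injective.eq_iff]

theorem PhiIRS_of_isEmpty [IsEmpty S] [Fintype X] [Nonempty X] (σ : S → Equiv.Perm X) :
    PhiIRS σ = Measure.dirac fun _ => true := by
  simp only [PhiIRS, FreeGroup.lift_of_isEmpty, Equiv.Perm.one_apply, decide_true,
    Finset.sum_const, Finset.card_univ, ← Nat.cast_smul_eq_nsmul ENNReal, smul_smul]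
  rw [ENNReal.inv_mul_cancel (by simp) (ENNReal.natCast_ne_top _), one_smul]

theorem abs_integral_PhiIRS_sub_le [Countable S] [Fintype X] (f : C(FreeGroup S → Bool, ℝ))
    {ε : ℝ} {W : Finset (FreeGroup S)}
    (hW : ∀ A B : FreeGroup S → Bool, (∀ w ∈ W, A w = B w) → dist (f A) (f B) < ε)
    (σ τ : S → Equiv.Perm X) :
    |∫ A, f A ∂PhiIRS σ - ∫ A, f A ∂PhiIRS τ| ≤ ε + 2 * ‖f‖ *
      (∑ w ∈ W, hammingDist ⇑(FreeGroup.lift σ w) ⇑(FreeGroup.lift τ w) : ℕ) / Fintype.card X := by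
  set B := W.biUnion fun w => {x | FreeGroup.lift σ w x ≠ FreeGroup.lift τ w x}
  have hε : 0 ≤ ε := (dist_self (f fun _ => true)).symm.trans_le (hW _ _ fun _ _ => rfl).le
  have hgood : ∀ x ∉ B, |f (stabIndicator σ x) - f (stabIndicator τ x)| ≤ ε := by
    intro x hx
    rw [← Real.dist_eq]
    refine (hW _ _ fun w hw => ?_).le
    have hfix : FreeGroup.lift σ w x = FreeGroup.lift τ w x := by
      by_contra hne
      exact hx (Finset.mem_biUnion.2 ⟨w, hw, by simpa using hne⟩)
    simp only [stabIndicator, hfix]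
  have hbad : ∀ x ∈ B, |f (stabIndicator σ x) - f (stabIndicator τ x)| ≤ 2 * ‖f‖ :=
    fun x _ => (Real.dist_eq _ _).symm.trans_le (f.dist_le_two_norm _ _)
  have hB : B.card ≤ ∑ w ∈ W, hammingDist ⇑(FreeGroup.lift σ w) ⇑(FreeGroup.lift τ w) :=
    Finset.card_biUnion_le
  have hsum := abs_sum_sub_sum_le _ _ B hgood hbad
  have hc : (Bᶜ.card : ℝ) ≤ Fintype.card X := by exact_mod_cast Finset.card_le_univ _
  rw [integral_PhiIRS, integral_PhiIRS, ← sub_div, abs_div, Nat.abs_cast]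
  calc _ ≤ (Fintype.card X * ε + 2 * ‖f‖ *
        (∑ w ∈ W, hammingDist ⇑(FreeGroup.lift σ w) ⇑(FreeGroup.lift τ w) : ℕ)) /
          Fintype.card X := by
        gcongr
        refine hsum.trans (add_le_add (by gcongr) ?_)
        rw [mul_comm]
        gcongr
    _ = Fintype.card X / Fintype.card X * ε + 2 * ‖f‖ *
        (∑ w ∈ W, hammingDist ⇑(FreeGroup.lift σ w) ⇑(FreeGroup.lift τ w) : ℕ) /
          Fintype.card X := by ring
    _ ≤ _ := by gcongr; exact mul_le_of_le_one_left hε (div_self_le_one _)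

theorem abs_integral_PhiIRS_sub_viaEmbedding_le [Countable S] [Fintype X] {Y : Type}
    [Fintype Y] [DecidableEq Y] (f : C(FreeGroup S → Bool, ℝ)) (ρ : S → Equiv.Perm Y)
    (e : Y ↪ X) :
    |∫ A, f A ∂PhiIRS ρ - ∫ A, f A ∂PhiIRS fun s => (ρ s).viaEmbedding e|
      ≤ 2 * ‖f‖ * (Fintype.card X - Fintype.card Y) / Fintype.card X := by
  rw [integral_PhiIRS, integral_PhiIRS]
  simp_rw [← stabIndicator_viaEmbedding ρ e]
  exact abs_sum_comp_div_sub_sum_div_le e _ fun _ => f.norm_coe_le_norm _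

end PhiIRS

theorem le_sum_mul_mul_sum_inv {ι : Type*} [Fintype ι] {w a : ι → ℝ} (hw : ∀ i, 0 < w i)
    (ha : ∀ i, 0 ≤ a i) (i : ι) : a i ≤ (∑ j, w j * a j) * ∑ j, (w j)⁻¹ := by
  have hwa : w i * a i ≤ ∑ j, w j * a j :=
    Finset.single_le_sum (fun j _ => mul_nonneg (hw j).le (ha j)) (Finset.mem_univ i)
  have hinv : (w i)⁻¹ ≤ ∑ j, (w j)⁻¹ :=
    Finset.single_le_sum (fun j _ => inv_nonneg.2 (hw j).le) (Finset.mem_univ i)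
  calc a i = w i * a i * (w i)⁻¹ := by field_simp [(hw i).ne']
    _ ≤ (∑ j, w j * a j) * ∑ j, (w j)⁻¹ :=
        mul_le_mul hwa hinv (inv_nonneg.2 (hw i).le) ((mul_nonneg (hw i).le (ha i)).trans hwa)

section NormalizedHammingDist

variable {n m : ℕ} (h : n ≤ m)

/-- The distance `d_H(σ, τ)` of the paper; `editDistFin sig h ρ φ` unfolds to
`⨅ θ, ∑ s, sig s * normalizedHammingDist h (ρ s) (θ * φ s * θ⁻¹)`. -/
noncomputable def normalizedHammingDist (σ : Equiv.Perm (Fin n)) (τ : Equiv.Perm (Fin m)) : ℝ :=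
  1 - (Nat.card {x : Fin n // Fin.castLE h (σ x) = τ (Fin.castLE h x)} : ℝ) / m

theorem sub_div_le_normalizedHammingDist (σ : Equiv.Perm (Fin n)) (τ : Equiv.Perm (Fin m)) :
    ((m : ℝ) - n) / m ≤ normalizedHammingDist h σ τ := by
  have hc : (Nat.card {x : Fin n // Fin.castLE h (σ x) = τ (Fin.castLE h x)} : ℝ) ≤ n := by
    rw [Nat.card_eq_fintype_card, Fintype.card_subtype]
    exact_mod_cast (Finset.card_le_univ _).trans (Fintype.card_fin n).le
  rw [normalizedHammingDist, sub_div]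
  gcongr
  exact div_self_le_one _

theorem normalizedHammingDist_nonneg (σ : Equiv.Perm (Fin n)) (τ : Equiv.Perm (Fin m)) :
    0 ≤ normalizedHammingDist h σ τ :=
  (div_nonneg (sub_nonneg.2 (Nat.cast_le.2 h)) (Nat.cast_nonneg _)).trans
    (sub_div_le_normalizedHammingDist h σ τ)

theorem hammingDist_viaEmbedding_le (σ : Equiv.Perm (Fin n)) (τ : Equiv.Perm (Fin m)) :
    (hammingDist ⇑(σ.viaEmbedding (Fin.castLEEmb h)) ⇑τ : ℝ) ≤ m * normalizedHammingDist h σ τ := by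
  set agree := ({x | Fin.castLE h (σ x) = τ (Fin.castLE h x)} : Finset (Fin n))
  have hdisj : Disjoint ({y | σ.viaEmbedding (Fin.castLEEmb h) y ≠ τ y} : Finset (Fin m))
      (agree.map (Fin.castLEEmb h)) := by
    refine Finset.disjoint_right.2 fun y hy hne => ?_
    obtain ⟨x, hx, rfl⟩ := Finset.mem_map.1 hy
    simp only [agree, Finset.mem_filter_univ] at hx
    simp only [Finset.mem_filter_univ, Equiv.Perm.viaEmbedding_apply] at hne
    exact hne hx
  have hcount : hammingDist ⇑(σ.viaEmbedding (Fin.castLEEmb h)) ⇑τ + agree.card ≤ m := by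
    rw [← Finset.card_map (Fin.castLEEmb h), hammingDist, ← Finset.card_union_of_disjoint hdisj]
    exact (Finset.card_le_univ _).trans (Fintype.card_fin m).le
  have hagree :
      Nat.card {x : Fin n // Fin.castLE h (σ x) = τ (Fin.castLE h x)} = agree.card := by
    rw [Nat.card_eq_fintype_card, Fintype.card_subtype]
  rcases Nat.eq_zero_or_pos m with rfl | hm
  · simp only [Nat.cast_zero, zero_mul, Nat.cast_nonpos]
    omega
  · rw [normalizedHammingDist, hagree, mul_sub, mul_one, mul_div_cancel₀ _ (by positivity)]
    have : ((hammingDist ⇑(σ.viaEmbedding (Fin.castLEEmb h)) ⇑τ + agree.card : ℕ) : ℝ) ≤ m := by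
      exact_mod_cast hcount
    push_cast at this
    linarith

end NormalizedHammingDist

section Continuity

variable {S : Type} [Fintype S] [Nonempty S]

theorem abs_integral_PhiIRS_sub_le_of_normalizedHammingDist_le [DecidableEq S]
    (f : C(FreeGroup S → Bool, ℝ))
    {ε : ℝ} {W : Finset (FreeGroup S)}
    (hW : ∀ A B : FreeGroup S → Bool, (∀ w ∈ W, A w = B w) → dist (f A) (f B) < ε)
    {n m : ℕ} (h : n ≤ m) (ρ : S → Equiv.Perm (Fin n)) (ψ : S → Equiv.Perm (Fin m)) {α : ℝ}
    (hα : ∀ s, normalizedHammingDist h (ρ s) (ψ s) ≤ α) :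
    |∫ A, f A ∂PhiIRS ρ - ∫ A, f A ∂PhiIRS ψ| ≤ ε + 2 * ‖f‖ * (1 + ∑ w ∈ W, w.norm) * α := by
  set ρ' := fun s => (ρ s).viaEmbedding (Fin.castLEEmb h)
  obtain ⟨s₀⟩ := ‹Nonempty S›
  have hα₀ : 0 ≤ α := (normalizedHammingDist_nonneg h _ _).trans (hα s₀)
  have hext : |∫ A, f A ∂PhiIRS ρ - ∫ A, f A ∂PhiIRS ρ'| ≤ 2 * ‖f‖ * α := by
    have := abs_integral_PhiIRS_sub_viaEmbedding_le f ρ (Fin.castLEEmb h)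
    simp only [Fintype.card_fin] at this
    refine this.trans ?_
    rw [mul_div_assoc]
    gcongr
    exact (sub_div_le_normalizedHammingDist h _ _).trans (hα s₀)
  have hgen (s : S) : (hammingDist ⇑(ρ' s) ⇑(ψ s) : ℝ) ≤ m * α :=
    (hammingDist_viaEmbedding_le h _ _).trans (by gcongr; exact hα s)
  have hwords : ((∑ w ∈ W, hammingDist ⇑(FreeGroup.lift ρ' w) ⇑(FreeGroup.lift ψ w) : ℕ) : ℝ)
      ≤ ((∑ w ∈ W, w.norm : ℕ) * α) * m := by
    push_cast
    rw [Finset.sum_mul, Finset.sum_mul]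
    refine Finset.sum_le_sum fun w _ => (FreeGroup.hammingDist_lift_le ρ' ψ hgen w).trans_eq ?_
    ring
  have hsame := abs_integral_PhiIRS_sub_le f hW ρ' ψ
  rw [Fintype.card_fin, mul_div_assoc] at hsame
  have hsame' := hsame.trans (add_le_add_right (mul_le_mul_of_nonneg_left
    (div_le_of_le_mul₀ (Nat.cast_nonneg _) (by positivity) hwords) (by positivity)) ε)
  calc _ ≤ |∫ A, f A ∂PhiIRS ρ - ∫ A, f A ∂PhiIRS ρ'|
          + |∫ A, f A ∂PhiIRS ρ' - ∫ A, f A ∂PhiIRS ψ| := abs_sub_le _ _ _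
    _ ≤ 2 * ‖f‖ * α + (ε + 2 * ‖f‖ * ((∑ w ∈ W, w.norm : ℕ) * α)) := add_le_add hext hsame'
    _ = ε + 2 * ‖f‖ * (1 + ∑ w ∈ W, w.norm) * α := by push_cast; ring

theorem exists_pos_abs_integral_PhiIRS_sub_lt_of_editDistFin_lt {sig : S → ℝ}
    (hsig : ∀ s, 0 < sig s)
    (f : C(FreeGroup S → Bool, ℝ)) {ε : ℝ} (hε : 0 < ε) :
    ∃ δ > 0, ∀ (n m : ℕ) (h : n ≤ m) (ρ : S → Equiv.Perm (Fin n)) (φ : S → Equiv.Perm (Fin m)),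
      editDistFin sig h ρ φ < δ → |∫ A, f A ∂PhiIRS ρ - ∫ A, f A ∂PhiIRS φ| < ε := by
  classical
  obtain ⟨W, hW⟩ := f.exists_finset_dist_lt (half_pos hε)
  set K := 2 * ‖f‖ * (1 + ∑ w ∈ W, w.norm) * ∑ s, (sig s)⁻¹
  have hK : 0 ≤ K :=
    mul_nonneg (by positivity) (Finset.sum_nonneg fun s _ => inv_nonneg.2 (hsig s).le)
  refine ⟨ε / 2 / (K + 1), by positivity, fun n m h ρ φ hd => ?_⟩
  obtain ⟨θ, hθ⟩ := exists_lt_of_ciInf_lt hd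
  have hclose := abs_integral_PhiIRS_sub_le_of_normalizedHammingDist_le f hW h ρ _
    (le_sum_mul_mul_sum_inv hsig (fun s => normalizedHammingDist_nonneg h (ρ s) (θ * φ s * θ⁻¹)))
  rw [PhiIRS_conj] at hclose
  have hKδ : K * (ε / 2 / (K + 1)) < ε / 2 := by
    rw [mul_div_assoc', div_lt_iff₀ (by positivity)]
    nlinarith
  calc _ ≤ ε / 2 + K * ∑ s, sig s * normalizedHammingDist h (ρ s) (θ * φ s * θ⁻¹) := by
        refine hclose.trans_eq ?_
        ring
    _ < ε / 2 + ε / 2 := by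
        gcongr
        exact (mul_le_mul_of_nonneg_left hθ.le hK).trans_lt hKδ
    _ = ε := add_halves ε

theorem exists_pos_abs_integral_sub_lt_of_editDistIRS_lt {sig : S → ℝ}
    (hsig : ∀ s, 0 < sig s) (f : C(FreeGroup S → Bool, ℝ)) {ε : ℝ} (hε : 0 < ε) :
    ∃ δ > 0, ∀ μ ν : Measure (FreeGroup S → Bool),
      (∃ n, ∃ ρ : S → Equiv.Perm (Fin n), PhiIRS ρ = μ) →
      (∃ n, ∃ ρ : S → Equiv.Perm (Fin n), PhiIRS ρ = ν) →
      editDistIRS sig μ ν < δ → |∫ A, f A ∂μ - ∫ A, f A ∂ν| < ε := by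
  obtain ⟨δ, hδ, hclose⟩ := exists_pos_abs_integral_PhiIRS_sub_lt_of_editDistFin_lt hsig f hε
  refine ⟨δ, hδ, ?_⟩
  rintro μ ν ⟨n, ρ, hρ⟩ ⟨n', ρ', hρ'⟩ hd
  obtain ⟨_, ⟨n, m, h, ρ, φ, hrep | hrep, rfl⟩, hd⟩ := exists_lt_of_csInf_lt (by
    rcases le_total n n' with h | h
    · exact ⟨_, n, n', h, ρ, ρ', Or.inl ⟨hρ, hρ'⟩, rfl⟩
    · exact ⟨_, n', n, h, ρ', ρ, Or.inr ⟨hρ', hρ⟩, rfl⟩) hd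
  · rw [← hrep.1, ← hrep.2]
    exact hclose n m h ρ φ hd
  · rw [← hrep.1, ← hrep.2, abs_sub_comm]
    exact hclose n m h ρ φ hd

end Continuity

theorem weakStar_limit_of_editDist_tendsto_zero_general
    (S : Type) [Fintype S] (sig : S → ℝ) (hsig : ∀ s, 0 < sig s)
    (π π' : ℕ → Measure (FreeGroup S → Bool))
    (πinf : Measure (FreeGroup S → Bool))
    (hfd : ∀ k, ∃ n : ℕ, 0 < n ∧ ∃ ρ : S → Equiv.Perm (Fin n), PhiIRS ρ = π k)
    (hfd' : ∀ k, ∃ n : ℕ, 0 < n ∧ ∃ ρ : S → Equiv.Perm (Fin n), PhiIRS ρ = π' k)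
    (hconv : ∀ f : C(FreeGroup S → Bool, ℝ),
        Filter.Tendsto (fun k => ∫ A, f A ∂(π k)) Filter.atTop (nhds (∫ A, f A ∂πinf)))
    (hedit : Filter.Tendsto (fun k => editDistIRS sig (π k) (π' k)) Filter.atTop (nhds 0)) :
    ∀ f : C(FreeGroup S → Bool, ℝ),
      Filter.Tendsto (fun k => ∫ A, f A ∂(π' k)) Filter.atTop (nhds (∫ A, f A ∂πinf)) := by
  intro f
  rcases isEmpty_or_nonempty S with hS | hS
  · have hπ (k : ℕ) : π' k = π k := by
      obtain ⟨n, hn, ρ, hρ⟩ := hfd k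
      obtain ⟨n', hn', ρ', hρ'⟩ := hfd' k
      have : Nonempty (Fin n) := ⟨⟨0, hn⟩⟩
      have : Nonempty (Fin n') := ⟨⟨0, hn'⟩⟩
      rw [← hρ, ← hρ', PhiIRS_of_isEmpty, PhiIRS_of_isEmpty]
    simpa only [hπ] using hconv f
  refine Metric.tendsto_nhds.2 fun ε hε => ?_
  obtain ⟨δ, hδ, hclose⟩ :=
    exists_pos_abs_integral_sub_lt_of_editDistIRS_lt hsig f (half_pos hε)
  filter_upwards [Metric.tendsto_nhds.1 (hconv f) _ (half_pos hε),
    hedit.eventually (gt_mem_nhds hδ)] with k hk hkδ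
  have hkk' := hclose (π k) (π' k) ((hfd k).imp fun _ => And.right)
    ((hfd' k).imp fun _ => And.right) hkδ
  calc dist (∫ A, f A ∂π' k) (∫ A, f A ∂πinf)
      ≤ dist (∫ A, f A ∂π' k) (∫ A, f A ∂π k) + dist (∫ A, f A ∂π k) (∫ A, f A ∂πinf) :=
        dist_triangle _ _ _
    _ < ε / 2 + ε / 2 := by
        refine add_lt_add ?_ hk
        rwa [dist_comm, Real.dist_eq]
    _ = ε := add_halves ε

/-- If `π_k, π'_k` are finitely described IRSs of `F(S)`, `π_k` converges weak* to an
invariant random subgroup `πinf`, and the `sig`-weighted edit distance between `π_k` and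
`π'_k` tends to `0`, then `π'_k` also converges weak* to `πinf`. -/
theorem weakStar_limit_of_editDist_tendsto_zero
    (S : Type) [Fintype S] (sig : S → ℝ) (hsig : ∀ s, 0 < sig s)
    (π π' : ℕ → Measure (FreeGroup S → Bool))
    (πinf : Measure (FreeGroup S → Bool)) [IsProbabilityMeasure πinf]
    (hfd : ∀ k, ∃ n : ℕ, 0 < n ∧ ∃ ρ : S → Equiv.Perm (Fin n), PhiIRS ρ = π k)
    (hfd' : ∀ k, ∃ n : ℕ, 0 < n ∧ ∃ ρ : S → Equiv.Perm (Fin n), PhiIRS ρ = π' k)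
    (hsub : πinf {A : FreeGroup S → Bool |
        ∃ H : Subgroup (FreeGroup S), ∀ w : FreeGroup S, A w = true ↔ w ∈ H} = 1)
    (hinv : ∀ w : FreeGroup S,
        πinf.map (fun (A : FreeGroup S → Bool) (u : FreeGroup S) => A (w⁻¹ * u * w)) = πinf)
    (hconv : ∀ f : C(FreeGroup S → Bool, ℝ),
        Filter.Tendsto (fun k => ∫ A, f A ∂(π k)) Filter.atTop (nhds (∫ A, f A ∂πinf)))
    (hedit : Filter.Tendsto (fun k => editDistIRS sig (π k) (π' k)) Filter.atTop (nhds 0)) :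
    ∀ f : C(FreeGroup S → Bool, ℝ),
      Filter.Tendsto (fun k => ∫ A, f A ∂(π' k)) Filter.atTop (nhds (∫ A, f A ∂πinf)) :=
  weakStar_limit_of_editDist_tendsto_zero_general S sig hsig π π' πinf hfd hfd' hconv hedit
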